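/- If T̂ is a cost-optimal basic tree for the normal form D̂ of a displacement sequence D and T̂ contains at least one idx or strc node, then adding the shift s = D[0] to the indices of the first idx-or-strc node on every root-to-leaf path of T̂ yields a tree of equal cost representing D, and this tree is cost-optimal for D. -/
import Mathlib

inductive TT : Type where
  | con : ℕ → TT
  | vec : ℕ → ℤ → TT → TT
  | idx : List ℤ → TT → TT
  | strc : List (ℤ × TT) → TT

theorem TT.sizeOf_snd_lt {ps : List (ℤ × TT)} (p : {x // x ∈ ps}) :
    sizeOf (p.1).2 < sizeOf (TT.strc ps) := by
  obtain ⟨⟨a, b⟩, hp⟩ := p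
  have := List.sizeOf_lt_of_mem hp
  simp at this ⊢
  omega

def flatten : TT → List ℤ
  | .con c => (List.range c).map (fun i => (i : ℤ))
  | .vec c d C => (List.range c).flatMap (fun i => (flatten C).map (· + (i : ℤ) * d))
  | .idx I C => I.flatMap (fun s => (flatten C).map (· + s))
  | .strc ps => ps.attach.flatMap (fun p => (flatten p.1.2).map (· + p.1.1))
decreasing_by
  all_goals first
  | exact TT.sizeOf_snd_lt _
  | decreasing_tactic

def cost (kc kv ki ks kl : ℕ) : TT → ℕ
  | .con _ => kc
  | .vec _ _ C => kv + cost kc kv ki ks kl C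
  | .idx I C => ki + I.length * kl + cost kc kv ki ks kl C
  | .strc ps => ks + 2 * ps.length * kl + (ps.attach.map (fun p => cost kc kv ki ks kl p.1.2)).sum
decreasing_by
  all_goals first
  | exact TT.sizeOf_snd_lt _
  | decreasing_tactic

/-- The tree contains at least one `idx` or `strc` node. -/
def HasIdxStrc : TT → Prop
  | .con _ => False
  | .vec _ _ C => HasIdxStrc C
  | .idx _ _ => True
  | .strc _ => True

/-- Add the shift `s` to all indices of the first `idx`-or-`strc` node on every
root-to-leaf path. -/
def addShift (s : ℤ) : TT → TT
  | .con c => .con c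
  | .vec c d C => .vec c d (addShift s C)
  | .idx I C => .idx (I.map (· + s)) C
  | .strc ps => .strc (ps.map (fun p => (p.1 + s, p.2)))

/-- `T` is a cost-optimal basic tree representing `D`
(cost model: all node constants equal to `K`, lookup cost 1). -/
def Optimal (K : ℕ) (D : List ℤ) (T : TT) : Prop :=
  flatten T = D ∧ ∀ T' : TT, flatten T' = D → cost K K K K 1 T ≤ cost K K K K 1 T'

lemma attach_map_eq {α β : Type*} (l : List α) (f : α → β) :
    l.attach.map (fun p => f p.1) = l.map f := by
  induction l with
  | nil => rfl
  | cons x xs ih =>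
    simp [List.attach_cons, List.map_map, Function.comp]

lemma flatten_strc (ps : List (ℤ × TT)) :
    flatten (.strc ps) = ps.flatMap (fun p => (flatten p.2).map (· + p.1)) := by
  rw [flatten, List.flatMap_def, List.flatMap_def,
    attach_map_eq ps (fun q => (flatten q.2).map (· + q.1))]

lemma cost_strc (kc kv ki ks kl : ℕ) (ps : List (ℤ × TT)) :
    cost kc kv ki ks kl (.strc ps) =
      ks + 2 * ps.length * kl + (ps.map (fun p => cost kc kv ki ks kl p.2)).sum := by
  rw [cost, attach_map_eq ps (fun q => cost kc kv ki ks kl q.2)]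

lemma flatten_addShift (s : ℤ) : ∀ T : TT, HasIdxStrc T →
    flatten (addShift s T) = (flatten T).map (· + s)
  | .con _ => fun h => h.elim
  | .vec c d C => fun h => by
      have ih := flatten_addShift s C h
      simp only [addShift, flatten, ih, List.map_flatMap, List.map_map]
      congr 1
      funext i
      congr 1
      funext x
      simp only [Function.comp]
      ring
  | .idx I C => fun _ => by
      simp only [addShift, flatten, List.flatMap_map, List.map_flatMap, List.map_map]
      congr 1
      funext t
      congr 1
      funext x
      simp only [Function.comp]
      ring
  | .strc ps => fun _ => by
      simp only [addShift, flatten_strc, List.flatMap_map, List.map_flatMap, List.map_map]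
      congr 1
      funext p
      congr 1
      funext x
      simp only [Function.comp]
      ring

lemma cost_addShift (kc kv ki ks kl : ℕ) (s : ℤ) : ∀ T : TT,
    cost kc kv ki ks kl (addShift s T) = cost kc kv ki ks kl T
  | .con _ => rfl
  | .vec c d C => by
      simp only [addShift, cost, cost_addShift kc kv ki ks kl s C]
  | .idx I C => by simp [addShift, cost]
  | .strc ps => by
      simp only [addShift, cost_strc, List.length_map, List.map_map]
      rfl

lemma headD_zero_of_noIdxStrc : ∀ T : TT, ¬ HasIdxStrc T → (flatten T).headD 0 = 0
  | .con c => fun _ => by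
      cases c with
      | zero => simp [flatten]
      | succ n => rw [flatten, List.range_succ_eq_map]; simp
  | .vec c d C => fun h => by
      have ih := headD_zero_of_noIdxStrc C h
      cases hC : flatten C with
      | nil =>
        rw [flatten]
        have : (List.range c).flatMap (fun i => (flatten C).map (· + (i : ℤ) * d)) = [] :=
          List.flatMap_eq_nil_iff.mpr (by simp [hC])
        rw [this]
        rfl
      | cons x xs =>
        rw [hC] at ih
        cases c with
        | zero => simp [flatten]
        | succ n =>
          rw [flatten, List.range_succ_eq_map]
          simp only [List.flatMap_cons, hC]
          simp at ih
          simp [ih]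
  | .idx I C => fun h => absurd trivial h
  | .strc ps => fun h => absurd trivial h

theorem stmt15 (K : ℕ) (hK : 0 < K) (D : List ℤ) (hne : D ≠ []) (T : TT)
    (hopt : Optimal K (D.map (· - D.headD 0)) T) (h : HasIdxStrc T) :
    flatten (addShift (D.headD 0) T) = D ∧
    cost K K K K 1 (addShift (D.headD 0) T) = cost K K K K 1 T ∧
    Optimal K D (addShift (D.headD 0) T) := by
  obtain ⟨hf, hmin⟩ := hopt
  set s := D.headD 0 with hs
  have hflat : flatten (addShift s T) = D := by
    rw [flatten_addShift s T h, hf, List.map_map]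
    have : ((fun x => x + s) ∘ fun x => x - s) = id := by funext x; simp
    rw [this, List.map_id]
  have hcost := cost_addShift K K K K 1 s T
  refine ⟨hflat, hcost, hflat, fun T' hT' => ?_⟩
  rw [hcost]
  by_cases hT'h : HasIdxStrc T'
  · have h1 : flatten (addShift (-s) T') = D.map (· - s) := by
      rw [flatten_addShift (-s) T' hT'h, hT']
      refine List.map_congr_left (fun x _ => ?_)
      ring
    have := hmin _ h1
    rwa [cost_addShift K K K K 1 (-s) T'] at this
  · have h0 : s = 0 := by
      have hz := headD_zero_of_noIdxStrc T' hT'h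
      rw [hT'] at hz
      exact hs.trans hz
    have hD : D.map (· - s) = D := by rw [h0]; simp
    exact hmin T' (by rw [hD, hT'])
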